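/- arXiv:2402.18003 — 2 statements merged into one kernel-verified Lean document; each statement's English description precedes it below -/
import Mathlib

section
/- The block-circulant matrix of a t-product equals the product of block-circulant matrices: bcirc(A ∗ B) = bcirc(A) · bcirc(B). -/
open Matrix

/-- A third-order real tensor represented by its frontal slices. -/
abbrev Tensor (n1 n2 n3 : ℕ) := Fin n3 → Matrix (Fin n1) (Fin n2) ℝ

/-- Block-circulant matrix of a third-order tensor. -/
def bcirc {n1 n2 n3 : ℕ} (A : Tensor n1 n2 n3) :
    Matrix (Fin n3 × Fin n1) (Fin n3 × Fin n2) ℝ :=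
  fun p q => A (p.1 - q.1) p.2 q.2

/-- Unfold: stack the frontal slices vertically. -/
def unfold {n2 l n3 : ℕ} (B : Tensor n2 l n3) :
    Matrix (Fin n3 × Fin n2) (Fin l) ℝ :=
  fun p j => B p.1 p.2 j

/-- Fold: inverse of unfold. -/
def fold {n1 l n3 : ℕ} (M : Matrix (Fin n3 × Fin n1) (Fin l) ℝ) :
    Tensor n1 l n3 :=
  fun k i j => M (k, i) j

/-- The t-product A ∗ B = fold(bcirc(A) · unfold(B)). -/
def tProd {n1 n2 l n3 : ℕ} (A : Tensor n1 n2 n3) (B : Tensor n2 l n3) :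
    Tensor n1 l n3 :=
  fold (bcirc A * unfold B)

theorem bcirc_tProd {n1 n2 l n3 : ℕ} (A : Tensor n1 n2 n3) (B : Tensor n2 l n3) :
    bcirc (tProd A B) = bcirc A * bcirc B := by
  ext p q
  cases n3 with
  | zero => exact p.1.elim0
  | succ m =>
    simp only [bcirc, tProd, fold, unfold, Matrix.mul_apply, Fintype.sum_prod_type]
    refine Fintype.sum_equiv (Equiv.addRight q.1) _ _ fun k => ?_
    refine Finset.sum_congr rfl fun i _ => ?_
    have h1 : p.1 - (k + q.1) = p.1 - q.1 - k := by
      simp [sub_add_eq_sub_sub, sub_right_comm]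
    have h2 : k + q.1 - q.1 = k := by simp
    simp [Equiv.addRight, h1, h2]
end

section
/- Every tensor A ∈ ℝ^{n1×n2×n3} admits a tensor QR factorization A = Q ∗ R where Q ∈ ℝ^{n1×n1×n3} is orthogonal under the t-product (Qᵀ ∗ Q = I) and every frontal slice of the Fourier-domain representation R̂ of R is upper triangular. -/
/-!
The DFT along the third mode turns the t-product into the slice-wise matrix product, the tensor
transpose into the slice-wise conjugate transpose and the identity tensor into identity slices,
and it is injective. So it suffices to factor every slice `Â k = U k * T k` with `(U k)ᴴ * U k = 1`
and `T k` upper triangular, and to transform `U` and `T` back. A family of complex slices is the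
DFT of a real tensor exactly when it is conjugate-symmetric, `G (-k) = conj (G k)`. Since `Â` is,
we factor `Â k` for one `k` of each pair `{k, -k}` and conjugate the factors for the other; when
`k = -k` the slice `Â k` is real and a real QR factorization is taken.
-/

open Matrix

/-- Tensor transpose: transpose each frontal slice and reverse the order of
slices 2 through n3. -/
def ttranspose {n1 n2 n3 : ℕ} (A : Tensor n1 n2 n3) : Tensor n2 n1 n3 :=
  fun k => (A (-k))ᵀ

/-- The identity tensor. -/
def idTensor (n n3 : ℕ) [NeZero n3] : Tensor n n n3 :=
  fun k => if k = 0 then (1 : Matrix (Fin n) (Fin n) ℝ) else 0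

/-- DFT along the third dimension of a real tensor, slice-wise. -/
noncomputable def dftSlices {n1 n2 n3 : ℕ} (R : Tensor n1 n2 n3) :
    Fin n3 → Matrix (Fin n1) (Fin n2) ℂ :=
  fun k i j => ∑ t : Fin n3,
    (R t i j : ℂ) * (Complex.exp (-2 * Real.pi * Complex.I / n3)) ^ (t.val * k.val)

namespace AddChar

variable {R : Type*} [CommRing R]

lemma IsPrimitive.inv {K : Type*} [CommRing K] {ψ : AddChar R K} (hψ : ψ.IsPrimitive) :
    ψ⁻¹.IsPrimitive := by
  intro a ha
  convert hψ (neg_ne_zero.mpr ha) using 1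
  ext x
  simp

variable [Fintype R]

section CommRing

variable {K : Type*} [CommRing K]

def dft {E : Type*} [AddCommMonoid E] [Module K E] (ψ : AddChar R K) (X : R → E) (k : R) : E :=
  ∑ t, ψ (t * k) • X t

theorem dft_apply_apply {m p : Type*} (ψ : AddChar R K) (X : R → Matrix m p K) (k : R) (i : m)
    (j : p) : ψ.dft X k i j = ψ.dft (fun t => X t i j) k := by
  simp [dft, Matrix.sum_apply]

theorem dft_convolution {m p q : Type*} [Fintype p] (ψ : AddChar R K)
    (X : R → Matrix m p K) (Y : R → Matrix p q K) (k : R) :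
    ψ.dft (fun t => ∑ s, X (t - s) * Y s) k = ψ.dft X k * ψ.dft Y k := by
  simp only [dft, Matrix.sum_mul, Matrix.mul_sum, Finset.smul_sum]
  rw [Finset.sum_comm]
  refine Finset.sum_congr rfl fun s _ => ?_
  refine Fintype.sum_equiv (Equiv.subRight s) _ _ fun t => ?_
  rw [Equiv.subRight_apply, Matrix.smul_mul, Matrix.mul_smul, smul_smul, ← map_add_eq_mul,
    ← add_mul, sub_add_cancel]

theorem dft_inv_dft [IsDomain K] {E : Type*} [AddCommMonoid E] [Module K E]
    {ψ : AddChar R K} (hψ : ψ.IsPrimitive) (X : R → E) (t : R) :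
    ψ⁻¹.dft (ψ.dft X) t = (Fintype.card R : K) • X t := by
  classical
  have orth (s : R) :
      ∑ k, ψ⁻¹ (k * t) * ψ (s * k) = if s = t then (Fintype.card R : K) else 0 := by
    have := sum_mulShift (s - t) hψ
    simp only [sub_eq_zero, Nat.cast_ite, Nat.cast_zero] at this
    rw [← this]
    refine Finset.sum_congr rfl fun k _ => ?_
    rw [inv_apply, ← map_add_eq_mul]
    ring_nf
  simp only [dft, Finset.smul_sum, smul_smul]
  rw [Finset.sum_comm]
  simp only [← Finset.sum_smul, orth, ite_smul, zero_smul, Finset.sum_ite_eq', Finset.mem_univ,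
    if_true]

theorem dft_dft_inv [IsDomain K] {E : Type*} [AddCommMonoid E] [Module K E]
    {ψ : AddChar R K} (hψ : ψ.IsPrimitive) (X : R → E) (t : R) :
    ψ.dft (ψ⁻¹.dft X) t = (Fintype.card R : K) • X t := by
  simpa using dft_inv_dft hψ.inv X t

end CommRing

theorem dft_injective {K : Type*} [Field K] [CharZero K] {E : Type*} [AddCommGroup E]
    [Module K E] {ψ : AddChar R K} (hψ : ψ.IsPrimitive) :
    Function.Injective (ψ.dft : (R → E) → R → E) := by
  intro X Y h
  funext t
  have := dft_inv_dft hψ X t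
  rw [h, dft_inv_dft hψ Y t] at this
  exact smul_right_injective E (Nat.cast_ne_zero.mpr Fintype.card_ne_zero) this.symm

section RCLike

variable {K : Type*} [RCLike K]

theorem dft_conjTranspose_neg {m p : Type*} (ψ : AddChar R K) (X : R → Matrix m p K) (k : R) :
    ψ.dft (fun t => (X (-t))ᴴ) k = (ψ.dft X k)ᴴ := by
  rw [dft, dft, conjTranspose_sum]
  refine Fintype.sum_equiv (Equiv.neg R) _ _ fun t => ?_
  rw [Equiv.neg_apply, conjTranspose_smul, neg_mul, map_neg_eq_conj, RCLike.star_def,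
    RCLike.conj_conj]

theorem dft_ofReal_neg (ψ : AddChar R K) (x : R → ℝ) (k : R) :
    ψ.dft (fun t => (x t : K)) (-k) = starRingEnd K (ψ.dft (fun t => (x t : K)) k) := by
  simp only [dft, map_sum, smul_eq_mul, map_mul, RCLike.conj_ofReal, mul_neg, map_neg_eq_conj]

theorem exists_dft_ofReal_eq {ψ : AddChar R K} (hψ : ψ.IsPrimitive) (g : R → K)
    (hg : ∀ k, g (-k) = starRingEnd K (g k)) : ∃ x : R → ℝ, ψ.dft (fun t => (x t : K)) = g := by
  set y := ψ⁻¹.dft (fun k => (Fintype.card R : K)⁻¹ • g k)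
  have hy (t : R) : starRingEnd K (y t) = y t := by
    simp only [y, dft, map_sum, smul_eq_mul, map_mul]
    refine Fintype.sum_equiv (Equiv.neg R) _ _ fun k => ?_
    simp [hg, map_neg_eq_conj]
  refine ⟨fun t => RCLike.re (y t), funext fun t => ?_⟩
  simp only [RCLike.conj_eq_iff_re.mp (hy _)]
  rw [dft_dft_inv hψ, smul_inv_smul₀ (Nat.cast_ne_zero.mpr Fintype.card_ne_zero)]

end RCLike

end AddChar

section

open scoped Fin.CommRing

namespace Fin

def powAddChar {M : Type*} [Monoid M] (n : ℕ) [NeZero n] {ζ : M} (hζ : ζ ^ n = 1) :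
    AddChar (Fin n) M where
  toFun a := ζ ^ a.val
  map_zero_eq_one' := by simp
  map_add_eq_mul' x y := by simp only [Fin.val_add, ← pow_eq_pow_mod _ hζ, pow_add]

theorem isPrimitive_powAddChar {M : Type*} [CommMonoid M] {n : ℕ} [NeZero n] {ζ : M}
    (hζ : IsPrimitiveRoot ζ n) : (powAddChar n hζ.pow_eq_one).IsPrimitive := by
  intro a ha h
  have : ζ ^ a.val = ζ ^ 0 := by simpa [powAddChar] using DFunLike.congr_fun h 1
  exact ha (Fin.ext (hζ.pow_inj a.isLt (NeZero.pos n) this))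

end Fin

theorem Complex.isPrimitiveRoot_exp_neg (n : ℕ) (h0 : n ≠ 0) :
    IsPrimitiveRoot (Complex.exp (-2 * Real.pi * Complex.I / n)) n := by
  have h := (Complex.isPrimitiveRoot_exp n h0).inv
  rwa [← Complex.exp_neg, ← neg_div, ← neg_mul, ← neg_mul] at h

noncomputable def dftChar (n : ℕ) [NeZero n] : AddChar (Fin n) ℂ :=
  Fin.powAddChar n (Complex.isPrimitiveRoot_exp_neg n (NeZero.ne n)).pow_eq_one

theorem isPrimitive_dftChar (n : ℕ) [NeZero n] : (dftChar n).IsPrimitive :=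
  Fin.isPrimitive_powAddChar (Complex.isPrimitiveRoot_exp_neg n (NeZero.ne n))

theorem tProd_apply {n1 n2 l n3 : ℕ} (A : Tensor n1 n2 n3) (B : Tensor n2 l n3) (t : Fin n3) :
    tProd A B t = ∑ s, A (t - s) * B s := by
  ext i j
  simp only [tProd, fold, bcirc, unfold, Matrix.mul_apply, Matrix.sum_apply]
  rw [Fintype.sum_prod_type]

section Tensor

variable {n1 n2 l n3 : ℕ} [NeZero n3]

theorem dftSlices_eq_dft (R : Tensor n1 n2 n3) :
    dftSlices R = (dftChar n3).dft (fun t => (R t).map (↑)) := by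
  funext k
  ext i j
  rw [AddChar.dft_apply_apply]
  refine Finset.sum_congr rfl fun t _ => ?_
  rw [pow_eq_pow_mod _ (Complex.isPrimitiveRoot_exp_neg n3 (NeZero.ne n3)).pow_eq_one,
    ← Fin.val_mul, smul_eq_mul, mul_comm]
  rfl

theorem dftSlices_tProd (A : Tensor n1 n2 n3) (B : Tensor n2 l n3) (k : Fin n3) :
    dftSlices (tProd A B) k = dftSlices A k * dftSlices B k := by
  simp only [dftSlices_eq_dft, tProd_apply, ← AddChar.dft_convolution]
  congr 1
  funext t
  ext i j
  simp [Matrix.sum_apply, Matrix.mul_apply]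

theorem dftSlices_ttranspose (A : Tensor n1 n2 n3) (k : Fin n3) :
    dftSlices (ttranspose A) k = (dftSlices A k)ᴴ := by
  simp only [dftSlices_eq_dft, ← AddChar.dft_conjTranspose_neg]
  congr 1
  funext t
  ext i j
  simp [ttranspose]

theorem dftSlices_idTensor (k : Fin n3) : dftSlices (idTensor n1 n3) k = 1 := by
  rw [dftSlices_eq_dft, AddChar.dft,
    Finset.sum_eq_single 0 (fun t _ ht => by simp [idTensor, ht]) (by simp)]
  simp [idTensor]

theorem dftSlices_neg (A : Tensor n1 n2 n3) (k : Fin n3) :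
    dftSlices A (-k) = (dftSlices A k).map (starRingEnd ℂ) := by
  ext i j
  simp only [dftSlices_eq_dft, AddChar.dft_apply_apply, Matrix.map_apply]
  exact AddChar.dft_ofReal_neg _ (fun t => A t i j) k

theorem dftSlices_injective : Function.Injective (dftSlices : Tensor n1 n2 n3 → _) := by
  intro A B h
  rw [dftSlices_eq_dft, dftSlices_eq_dft] at h
  funext t
  exact Matrix.map_injective Complex.ofReal_injective
    (congrFun (AddChar.dft_injective (isPrimitive_dftChar n3) h) t)

theorem exists_dftSlices_eq (G : Fin n3 → Matrix (Fin n1) (Fin n2) ℂ)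
    (hG : ∀ k, G (-k) = (G k).map (starRingEnd ℂ)) : ∃ R : Tensor n1 n2 n3, dftSlices R = G := by
  choose x hx using fun i j => AddChar.exists_dft_ofReal_eq (isPrimitive_dftChar n3)
    (fun k => G k i j) (fun k => congrFun (congrFun (hG k) i) j)
  refine ⟨fun t => Matrix.of fun i j => x i j t, funext fun k => ?_⟩
  ext i j
  rw [dftSlices_eq_dft, AddChar.dft_apply_apply]
  exact congrFun (hx i j) k

end Tensor

end

theorem Function.Involutive.exists_equivariant {ι α : Type*} [LinearOrder ι] {σ : ι → ι}
    (hσ : σ.Involutive) {c : α → α} (hc : c.Involutive) {P : ι → α → Prop}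
    (hP : ∀ k x, P k x → P (σ k) (c x)) (hfix : ∀ k, ∃ x, P k x ∧ (σ k = k → c x = x)) :
    ∃ f : ι → α, ∀ k, P k (f k) ∧ f (σ k) = c (f k) := by
  choose g hg using hfix
  -- `f` is `g` on the representatives `k ≤ σ k` of the orbits, and is forced elsewhere.
  refine ⟨fun k => if k ≤ σ k then g k else c (g (σ k)), fun k => ⟨?_, ?_⟩⟩
  · dsimp only
    split_ifs
    · exact (hg k).1
    · simpa only [hσ k] using hP _ _ (hg (σ k)).1
  · dsimp only
    simp only [hσ k]
    split_ifs with h₁ h₂ h₂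
    · have hk := le_antisymm h₁ h₂
      rw [hk, (hg k).2 hk]
    · exact (hc _).symm
    · rfl
    · exact absurd (le_total k (σ k)) (by tauto)

namespace Matrix

variable {K : Type*} {m n : ℕ}

structure IsQR [CommRing K] [StarRing K] (M : Matrix (Fin m) (Fin n) K)
    (U : Matrix (Fin m) (Fin m) K) (T : Matrix (Fin m) (Fin n) K) : Prop where
  conjTranspose_mul_self : Uᴴ * U = 1
  eq_mul : M = U * T
  upper : ∀ (i : Fin m) (j : Fin n), (j : ℕ) < i → T i j = 0

theorem IsQR.map {L : Type*} [CommRing K] [StarRing K] [CommRing L] [StarRing L]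
    {M : Matrix (Fin m) (Fin n) K} {U T} (h : IsQR M U T) (f : K →+* L)
    (hf : ∀ x, f (star x) = star (f x)) : IsQR (M.map f) (U.map f) (T.map f) where
  conjTranspose_mul_self := by
    rw [← conjTranspose_map f hf, ← Matrix.map_mul, h.conjTranspose_mul_self, Matrix.map_one f
      f.map_zero f.map_one]
  eq_mul := by rw [h.eq_mul, Matrix.map_mul]
  upper i j hji := by simp [h.upper i j hji]

theorem exists_isQR [RCLike K] (M : Matrix (Fin m) (Fin n) K) : ∃ U T, IsQR M U T := by
  classical
  let col (j : Fin m) : EuclideanSpace K (Fin m) :=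
    if h : (j : ℕ) < n then WithLp.toLp 2 (fun r => M r ⟨j, h⟩) else 0
  have hdim : Module.finrank K (EuclideanSpace K (Fin m)) = Fintype.card (Fin m) :=
    finrank_euclideanSpace
  let b := InnerProductSpace.gramSchmidtOrthonormalBasis hdim col
  let U := (EuclideanSpace.basisFun (Fin m) K).toBasis.toMatrix b.toBasis
  have hU : Uᴴ * U = 1 :=
    (EuclideanSpace.basisFun _ _).toMatrix_orthonormalBasis_conjTranspose_mul_self b
  refine ⟨U, Uᴴ * M, hU, by rw [← Matrix.mul_assoc, mul_eq_one_comm.mp hU, Matrix.one_mul], ?_⟩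
  intro i j hji
  have hcol : col ⟨j, hji.trans i.isLt⟩ = WithLp.toLp 2 (fun r => M r j) := by simp [col]
  have := InnerProductSpace.gramSchmidtOrthonormalBasis_inv_triangular hdim col
    (i := ⟨j, hji.trans i.isLt⟩) (j := i) hji
  rw [hcol, EuclideanSpace.inner_eq_star_dotProduct] at this
  simpa [U, Matrix.mul_apply, Module.Basis.toMatrix_apply, dotProduct, mul_comm] using this

theorem exists_isQR_of_map_conj_eq [RCLike K] {M : Matrix (Fin m) (Fin n) K}
    (hM : M.map (starRingEnd K) = M) :
    ∃ U T, IsQR M U T ∧ U.map (starRingEnd K) = U ∧ T.map (starRingEnd K) = T := by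
  have hreal : (M.map RCLike.re).map (algebraMap ℝ K) = M := by
    ext i j
    exact RCLike.conj_eq_iff_re.mp (congrFun (congrFun hM i) j)
  obtain ⟨U, T, h⟩ := exists_isQR (M.map RCLike.re)
  refine ⟨U.map (algebraMap ℝ K), T.map (algebraMap ℝ K), hreal ▸ h.map _ ?_, ?_, ?_⟩
  · simp
  all_goals ext; simp

theorem exists_isQR_of_neg_eq_map_conj {ι : Type*} [InvolutiveNeg ι] [LinearOrder ι] [RCLike K]
    (G : ι → Matrix (Fin m) (Fin n) K) (hG : ∀ k, G (-k) = (G k).map (starRingEnd K)) :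
    ∃ (U : ι → Matrix (Fin m) (Fin m) K) (T : ι → Matrix (Fin m) (Fin n) K), ∀ k,
      IsQR (G k) (U k) (T k) ∧ U (-k) = (U k).map (starRingEnd K) ∧
        T (-k) = (T k).map (starRingEnd K) := by
  have hfix (k : ι) : ∃ UT : Matrix (Fin m) (Fin m) K × Matrix (Fin m) (Fin n) K,
      IsQR (G k) UT.1 UT.2 ∧
        (-k = k → (UT.1.map (starRingEnd K), UT.2.map (starRingEnd K)) = UT) := by
    by_cases hk : -k = k
    · obtain ⟨U, T, h, hU, hT⟩ := exists_isQR_of_map_conj_eq (M := G k) (by rw [← hG, hk])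
      exact ⟨(U, T), h, fun _ => by simp [hU, hT]⟩
    · obtain ⟨U, T, h⟩ := exists_isQR (G k)
      exact ⟨(U, T), h, fun h' => absurd h' hk⟩
  obtain ⟨F, hF⟩ := Function.Involutive.exists_equivariant (σ := Neg.neg) neg_involutive
    (c := fun UT : Matrix (Fin m) (Fin m) K × Matrix (Fin m) (Fin n) K =>
      (UT.1.map (starRingEnd K), UT.2.map (starRingEnd K)))
    (fun UT => by ext <;> simp)
    (P := fun k UT => IsQR (G k) UT.1 UT.2)
    (fun k UT h => hG k ▸ h.map _ fun _ => rfl) hfix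
  exact ⟨fun k => (F k).1, fun k => (F k).2,
    fun k => ⟨(hF k).1, congrArg Prod.fst (hF k).2, congrArg Prod.snd (hF k).2⟩⟩

end Matrix

theorem tensor_qr_exists {n1 n2 n3 : ℕ} [NeZero n3] (A : Tensor n1 n2 n3) :
    ∃ (Q : Tensor n1 n1 n3) (R : Tensor n1 n2 n3),
      tProd (ttranspose Q) Q = idTensor n1 n3 ∧
      A = tProd Q R ∧
      ∀ (k : Fin n3) (i : Fin n1) (j : Fin n2), j.val < i.val → dftSlices R k i j = 0 := by
  obtain ⟨U, T, hUT⟩ := Matrix.exists_isQR_of_neg_eq_map_conj (dftSlices A) (dftSlices_neg A)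
  obtain ⟨Q, hQ⟩ := exists_dftSlices_eq U fun k => (hUT k).2.1
  obtain ⟨R, hR⟩ := exists_dftSlices_eq T fun k => (hUT k).2.2
  refine ⟨Q, R, dftSlices_injective (funext fun k => ?_),
    dftSlices_injective (funext fun k => ?_), fun k i j hji => ?_⟩
  · rw [dftSlices_tProd, dftSlices_ttranspose, dftSlices_idTensor, hQ]
    exact (hUT k).1.conjTranspose_mul_self
  · rw [dftSlices_tProd, hQ, hR]
    exact (hUT k).1.eq_mul
  · rw [hR]
    exact (hUT k).1.upper i j hji
end
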